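/- Let c be a Coxeter element in the Weyl group of an affine root system of rank n. The direct sum U_c of all eigenspaces of c acting on V equals {v ∈ V : K(γ_c, v) = 0}. -/

import Mathlib

open scoped BigOperators

noncomputable section

/-- A symmetrizable generalized Cartan matrix of affine type, together with the
coefficient vector `dz` of the primitive positive imaginary root `δ` spanning the
(one dimensional) kernel of the associated symmetric bilinear form. -/
structure AffineGCM (n : ℕ) where
  /-- the generalized Cartan matrix -/
  a : Matrix (Fin n) (Fin n) ℤ
  /-- symmetrizing factors -/
  d : Fin n → ℝ
  diag : ∀ i, a i i = 2
  offdiag : ∀ i j, i ≠ j → a i j ≤ 0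
  d_pos : ∀ i, 0 < d i
  symmetrizable : ∀ i j, d i * (a i j : ℝ) = d j * (a j i : ℝ)
  /-- `K` is positive semidefinite (on the real span of the simple roots) -/
  posSemidef : ∀ g : Fin n → ℝ, 0 ≤ ∑ i, ∑ j, g i * g j * (d i * (a i j : ℝ))
  /-- `K` is not positive definite -/
  not_posDef : ∃ g : Fin n → ℝ, g ≠ 0 ∧ ∑ i, ∑ j, g i * g j * (d i * (a i j : ℝ)) = 0
  /-- the restriction of `K` to the span of every proper subset of the simple roots
  is positive definite -/
  proper_posDef : ∀ J : Finset (Fin n), J ≠ Finset.univ →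
    ∀ g : Fin n → ℝ, (∀ i, i ∉ J → g i = 0) → g ≠ 0 →
      0 < ∑ i, ∑ j, g i * g j * (d i * (a i j : ℝ))
  /-- coordinates of the positive imaginary root `δ` in the basis of simple roots -/
  dz : Fin n → ℤ
  dz_pos : ∀ i, 0 < dz i
  /-- `δ` is the imaginary root closest to the origin: its coordinates are coprime -/
  dz_prim : Finset.univ.gcd dz = 1
  /-- `δ` spans the kernel of `K` -/
  dz_ker : ∀ j, ∑ i, (dz i : ℝ) * (d i * (a i j : ℝ)) = 0

namespace AffineGCM

variable {n : ℕ}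

/-- The ambient vector space `V`, with the simple roots as standard basis. -/
abbrev V (n : ℕ) := Fin n → ℂ

/-- the simple root `α i` (the `i`-th standard basis vector) -/
def α (i : Fin n) : V n := Pi.single i 1

/-- a vector is *positive* if it lies in the nonnegative real span of the simple roots -/
def IsPosRoot (v : V n) : Prop := ∀ i, 0 ≤ (v i).re ∧ (v i).im = 0

/-- a vector is *negative* if it lies in the nonpositive real span of the simple roots -/
def IsNegRoot (v : V n) : Prop := ∀ i, (v i).re ≤ 0 ∧ (v i).im = 0

/-- the `g`-orbit of `x`: all `g ^ k • x` for integers `k` -/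
def orbit (g : V n ≃ₗ[ℂ] V n) (x : V n) : Set (V n) := Set.range fun k : ℤ => (g ^ k) x

/-- `U g`: the span of all eigenvectors of `g`, i.e. the direct sum of its eigenspaces -/
def eigSpan (g : V n ≃ₗ[ℂ] V n) : Submodule ℂ (V n) :=
  ⨆ μ : ℂ, Module.End.eigenspace (g : Module.End ℂ (V n)) μ

/-- the span `V_fin` of the simple roots other than `α aff` -/
def Vfin (aff : Fin n) : Submodule ℂ (V n) :=
  Submodule.span ℂ (α '' {i : Fin n | i ≠ aff})

variable (C : AffineGCM n)

/-- the simple coroot `α i ^ ∨ = (d i)⁻¹ • α i` -/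
def coroot (i : Fin n) : V n := ((C.d i : ℂ))⁻¹ • α i

/-- The symmetric bilinear form `K`, determined by `K (coroot i) (α j) = a i j`,
that is, `K (α i) (α j) = d i * a i j`. -/
def K : V n →ₗ[ℂ] V n →ₗ[ℂ] ℂ :=
  LinearMap.mk₂ ℂ
    (fun x y => ∑ i, ∑ j, x i * y j * ((C.d i : ℂ) * (C.a i j : ℂ)))
    (fun x x' y => by
      simp only [Pi.add_apply, add_mul, Finset.sum_add_distrib])
    (fun r x y => by
      simp only [Pi.smul_apply, smul_eq_mul, Finset.mul_sum]
      exact Finset.sum_congr rfl fun i _ => Finset.sum_congr rfl fun j _ => by ring)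
    (fun x y y' => by
      simp only [Pi.add_apply, mul_add, add_mul, Finset.sum_add_distrib])
    (fun r x y => by
      simp only [Pi.smul_apply, smul_eq_mul, Finset.mul_sum]
      exact Finset.sum_congr rfl fun i _ => Finset.sum_congr rfl fun j _ => by ring)

/-- the linear map `v ↦ v - K x v • y`; reflections are special cases -/
def reflMap (x y : V n) : V n →ₗ[ℂ] V n where
  toFun v := v - C.K x v • y
  map_add' u v := by simp only [map_add, add_smul]; abel
  map_smul' r u := by simp only [map_smul, smul_eq_mul, RingHom.id_apply, smul_sub, smul_smul]

lemma reflMap_apply (x y v : V n) : C.reflMap x y v = v - C.K x v • y := rfl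

/-- the simple reflection `s i` as a linear endomorphism -/
def sLin (i : Fin n) : V n →ₗ[ℂ] V n := C.reflMap (C.coroot i) (α i)

lemma K_α_α (i j : Fin n) : C.K (α i) (α j) = (C.d i : ℂ) * (C.a i j : ℂ) := by
  simp [K, α, LinearMap.mk₂_apply, Pi.single_apply, ite_mul, zero_mul,
    Finset.sum_ite_eq', Finset.mem_univ]

lemma K_coroot_α (i j : Fin n) : C.K (C.coroot i) (α j) = (C.a i j : ℂ) := by
  have hd : (C.d i : ℂ) ≠ 0 := by exact_mod_cast ne_of_gt (C.d_pos i)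
  simp only [coroot, map_smul, LinearMap.smul_apply, smul_eq_mul, K_α_α]
  field_simp

lemma sLin_invol (i : Fin n) (v : V n) : C.sLin i (C.sLin i v) = v := by
  have h2 : C.K (C.coroot i) (α i) = 2 := by
    rw [K_coroot_α, C.diag]; norm_num
  simp only [sLin, reflMap_apply, map_sub, map_smul, h2, smul_eq_mul]
  module

/-- the simple reflection `s i` -/
def s (i : Fin n) : V n ≃ₗ[ℂ] V n :=
  LinearEquiv.ofLinear (C.sLin i) (C.sLin i)
    (LinearMap.ext fun v => C.sLin_invol i v) (LinearMap.ext fun v => C.sLin_invol i v)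

/-- the Weyl group `W`, as a subgroup of the group of linear automorphisms of `V` -/
def Wgroup : Subgroup (V n ≃ₗ[ℂ] V n) := Subgroup.closure (Set.range C.s)

/-- the Coxeter element `c = s 1 * s 2 * ⋯ * s n` -/
def cox : V n ≃ₗ[ℂ] V n := (List.ofFn C.s).prod

/-- the positive imaginary root `δ` -/
def δv : V n := fun i => ((C.dz i : ℤ) : ℂ)

/-- the set of real roots: `W`-images of the simple roots -/
def realRoots : Set (V n) := {v | ∃ w ∈ C.Wgroup, ∃ i, w (α i) = v}

/-- the root system `Φ`: real roots together with the imaginary roots `k • δ`, `k ≠ 0` -/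
def Φ : Set (V n) := C.realRoots ∪ {v | ∃ k : ℤ, k ≠ 0 ∧ v = (k : ℂ) • C.δv}

/-- `T→ = {α 1, s 1 α 2, …, s 1 ⋯ s (n-1) α n}` -/
def Tproj : Set (V n) :=
  Set.range fun k : Fin n => ((List.ofFn C.s).take k.val).prod (α k)

/-- `T← = {α n, s n α (n-1), …, s n ⋯ s 2 α 1}` -/
def Tinj : Set (V n) :=
  Set.range fun k : Fin n => ((List.ofFn C.s).reverse.take (n - 1 - k.val)).prod (α k)

/-- `Φ_fin`, the finite root system `Φ ∩ V_fin` -/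
def Φfin (aff : Fin n) : Set (V n) := C.Φ ∩ (Vfin aff : Set (V n))

/-- the root `θ = δ - [δ : α aff] • α aff` of `Φ_fin` -/
def θv (aff : Fin n) : V n := C.δv - ((C.dz aff : ℤ) : ℂ) • α aff

/-- the reflection `t β : v ↦ v - K (β^∨) v • β` in a (real) root `β`,
where `β^∨ = (2 / K β β) • β` -/
def tRefl (β : V n) : V n →ₗ[ℂ] V n := C.reflMap ((2 / C.K β β) • β) β

/-- `c_◁ = s 1 * ⋯ * s (aff - 1)` -/
def cleft (aff : Fin n) : V n →ₗ[ℂ] V n := ((List.ofFn C.sLin).take aff.val).prod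

/-- `c_▷ = s (aff + 1) * ⋯ * s n` -/
def cright (aff : Fin n) : V n →ₗ[ℂ] V n := ((List.ofFn C.sLin).drop (aff.val + 1)).prod

/-- `Υ^fin = Φ_fin ∩ U c` -/
def Υfin (aff : Fin n) : Set (V n) := C.Φfin aff ∩ (eigSpan C.cox : Set (V n))

/-- `B` is a simple system for a set `Θ` of roots: a linearly independent subset of `Θ`
such that every element of `Θ` is a nonnegative or a nonpositive combination of `B`. -/
def IsSimpleSystem (Θ : Set (V n)) (B : Finset (V n)) : Prop :=
  ↑B ⊆ Θ ∧ LinearIndependent ℂ (fun b : B => (b : V n)) ∧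
    ∀ v ∈ Θ, ∃ g : V n → ℝ, ((∀ b ∈ B, 0 ≤ g b) ∨ (∀ b ∈ B, g b ≤ 0)) ∧
      v = ∑ b ∈ B, (g b : ℂ) • b

/-- two roots of `Θ` are connected if they are joined by a chain of roots of `Θ`
that are pairwise non-orthogonal (with respect to `K`) -/
def Connected (Θ : Set (V n)) (x y : V n) : Prop :=
  Relation.ReflTransGen (fun u v => u ∈ Θ ∧ v ∈ Θ ∧ C.K u v ≠ 0) x y

/-- the irreducible component of `x` in `Θ` -/
def component (Θ : Set (V n)) (x : V n) : Set (V n) := {y | y ∈ Θ ∧ C.Connected Θ x y}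

/-- a set of roots is of finite type `A` if it consists exactly of the vectors
`±(β i + β (i+1) + ⋯ + β j)` for a linearly independent family `β 1, …, β k` -/
def IsTypeA (Θ : Set (V n)) : Prop :=
  ∃ (k : ℕ) (β : Fin k → V n), LinearIndependent ℂ β ∧ (∀ i, β i ∈ Θ) ∧
    Θ = {v | ∃ i j : Fin k, i ≤ j ∧
      (v = ∑ l ∈ Finset.Icc i j, β l ∨ v = -∑ l ∈ Finset.Icc i j, β l)}

/-- `Ω = {β 1, t (β 1) (β 2), …, t (β 1) ⋯ t (β (m-1)) (β m)}` for an ordered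
tuple `β` of roots -/
def Ωset {m : ℕ} (β : Fin m → V n) : Set (V n) :=
  Set.range fun j : Fin m => (((List.ofFn fun i => C.tRefl (β i)).take j.val).prod) (β j)

/-- `s i` is initial in a Coxeter element `c` if `c` is the product of a permutation
of all the simple reflections starting with `s i` -/
def IsInitial (i : Fin n) (c : V n ≃ₗ[ℂ] V n) : Prop :=
  ∃ l : List (Fin n), (i :: l).Perm (List.finRange n) ∧ ((i :: l).map C.s).prod = c

/-- `s i` is final in a Coxeter element `c` if `c` is the product of a permutation
of all the simple reflections ending with `s i` -/
def IsFinal (i : Fin n) (c : V n ≃ₗ[ℂ] V n) : Prop :=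
  ∃ l : List (Fin n), (l ++ [i]).Perm (List.finRange n) ∧ ((l ++ [i]).map C.s).prod = c

/-- the skew-symmetric bilinear form `ω_c`, determined by
`ω_c (coroot i) (α j) = a i j` if `i > j`, `= 0` if `i = j`, `= -a i j` if `i < j` -/
def ω : V n →ₗ[ℂ] V n →ₗ[ℂ] ℂ :=
  LinearMap.mk₂ ℂ
    (fun x y => ∑ i, ∑ j, x i * y j *
      ((if j < i then 1 else if i = j then 0 else -1) * ((C.d i : ℂ) * (C.a i j : ℂ))))
    (fun x x' y => by
      simp only [Pi.add_apply, add_mul, Finset.sum_add_distrib])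
    (fun r x y => by
      simp only [Pi.smul_apply, smul_eq_mul, Finset.mul_sum]
      exact Finset.sum_congr rfl fun i _ => Finset.sum_congr rfl fun j _ => by ring)
    (fun x y y' => by
      simp only [Pi.add_apply, mul_add, add_mul, Finset.sum_add_distrib])
    (fun r x y => by
      simp only [Pi.smul_apply, smul_eq_mul, Finset.mul_sum]
      exact Finset.sum_congr rfl fun i _ => Finset.sum_congr rfl fun j _ => by ring)

/-! The Weyl group preserves `K`, fixes `δ` and commutes with complex conjugation, and the
vectors fixed by `c` lie in the radical `ℂ ∙ δ` of `K`. An eigenvector `w` of `c` for `μ ≠ 1`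
is orthogonal to `γ` because `K γ w = K (c γ) (c w) = μ K γ w`; for `μ = 1` it is in the radical.
Conversely, `K` being positive semidefinite with radical `ℂ ∙ δ`, the `c`-invariant Hermitian
form `K (star ·) ·` is isotropic only on `ℂ ∙ δ`. This forces all Jordan blocks of `c` modulo
`ℂ ∙ δ` to be trivial, whence `V = U_c ⊕ ℂ ∙ γ`. Finally `γ` is real, nonzero and in `V_fin`,
so `K γ γ ≠ 0` and `U_c` is all of `γ^⊥`. -/

lemma K_apply (x y : V n) :
    C.K x y = ∑ i, ∑ j, x i * y j * ((C.d i : ℂ) * (C.a i j : ℂ)) := rfl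

lemma K_comm (x y : V n) : C.K x y = C.K y x := by
  rw [K_apply, K_apply, Finset.sum_comm]
  refine Finset.sum_congr rfl fun i _ => Finset.sum_congr rfl fun j _ => ?_
  have h := congrArg Complex.ofReal (C.symmetrizable j i)
  push_cast at h
  rw [h]
  ring

lemma K_δv : C.K C.δv = 0 := by
  refine LinearMap.ext fun y => ?_
  rw [K_apply, Finset.sum_comm]
  refine Finset.sum_eq_zero fun j _ => ?_
  have h := congrArg Complex.ofReal (C.dz_ker j)
  push_cast at h
  simp only [δv]
  rw [← mul_zero (y j), ← h, Finset.mul_sum]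
  exact Finset.sum_congr rfl fun i _ => by ring

lemma K_apply_δv (x : V n) : C.K x C.δv = 0 := by
  rw [K_comm, K_δv, LinearMap.zero_apply]

lemma δv_apply_ne_zero (i : Fin n) : C.δv i ≠ 0 := by
  simpa [δv] using (C.dz_pos i).ne'

lemma star_δv : star C.δv = C.δv := by
  ext i
  simp [δv]

lemma star_α (i : Fin n) : star (α i : V n) = α i := by
  ext j
  simp [α, Pi.single_apply, apply_ite]

lemma star_coroot (i : Fin n) : star (C.coroot i) = C.coroot i := by
  simp [coroot, star_smul, star_α, Complex.conj_ofReal]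

lemma K_star_star (u v : V n) : C.K (star u) (star v) = star (C.K u v) := by
  simp only [K_apply, star_sum, star_mul', Pi.star_apply]
  refine Finset.sum_congr rfl fun i _ => Finset.sum_congr rfl fun j _ => ?_
  simp [Complex.conj_ofReal]

lemma s_apply (i : Fin n) (v : V n) : C.s i v = v - C.K (C.coroot i) v • α i := rfl

lemma K_s_s (i : Fin n) (u v : V n) : C.K (C.s i u) (C.s i v) = C.K u v := by
  have hd : (C.d i : ℂ) ≠ 0 := by exact_mod_cast (C.d_pos i).ne'
  have hαα : C.K (α i) (α i) = 2 * C.d i := by rw [K_α_α, C.diag]; push_cast; ring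
  have hcoroot : ∀ w, C.K (α i) w = C.d i * C.K (C.coroot i) w := fun w => by
    rw [coroot, map_smul, LinearMap.smul_apply, smul_eq_mul, mul_inv_cancel_left₀ hd]
  simp only [s_apply, map_sub, map_smul, LinearMap.sub_apply, LinearMap.smul_apply, smul_eq_mul]
  rw [K_comm C u (α i), hαα, hcoroot u, hcoroot v]
  ring

lemma s_δv (i : Fin n) : C.s i C.δv = C.δv := by
  rw [s_apply, K_apply_δv, zero_smul, sub_zero]

lemma s_star (i : Fin n) (v : V n) : C.s i (star v) = star (C.s i v) := by
  rw [s_apply, s_apply, star_sub, star_smul, star_α, ← K_star_star, star_coroot]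

lemma K_apply_apply_of_mem_Wgroup {w : V n ≃ₗ[ℂ] V n} (hw : w ∈ C.Wgroup) (u v : V n) :
    C.K (w u) (w v) = C.K u v := by
  induction hw using Subgroup.closure_induction generalizing u v with
  | mem _ hx => obtain ⟨i, rfl⟩ := hx; exact C.K_s_s i u v
  | one => rfl
  | mul x y _ _ hx hy => rw [LinearEquiv.mul_apply, LinearEquiv.mul_apply, hx, hy]
  | inv x _ hx => rw [LinearEquiv.coe_inv, ← hx, LinearEquiv.apply_symm_apply,
      LinearEquiv.apply_symm_apply]

lemma apply_δv_of_mem_Wgroup {w : V n ≃ₗ[ℂ] V n} (hw : w ∈ C.Wgroup) : w C.δv = C.δv := by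
  induction hw using Subgroup.closure_induction with
  | mem _ hx => obtain ⟨i, rfl⟩ := hx; exact C.s_δv i
  | one => rfl
  | mul x y _ _ hx hy => rw [LinearEquiv.mul_apply, hy, hx]
  | inv x _ hx => rw [LinearEquiv.coe_inv, LinearEquiv.symm_apply_eq, hx]

lemma apply_star_of_mem_Wgroup {w : V n ≃ₗ[ℂ] V n} (hw : w ∈ C.Wgroup) (v : V n) :
    w (star v) = star (w v) := by
  induction hw using Subgroup.closure_induction generalizing v with
  | mem _ hx => obtain ⟨i, rfl⟩ := hx; exact C.s_star i v
  | one => rfl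
  | mul x y _ _ hx hy => rw [LinearEquiv.mul_apply, LinearEquiv.mul_apply, hy, hx]
  | inv x _ hx => rw [LinearEquiv.coe_inv, LinearEquiv.symm_apply_eq, hx, LinearEquiv.apply_symm_apply]

lemma cox_mem_Wgroup : C.cox ∈ C.Wgroup :=
  Subgroup.list_prod_mem _ fun _ hx =>
    Subgroup.subset_closure (by simpa [List.mem_ofFn] using hx)

lemma prod_s_apply_of_notMem {l : List (Fin n)} {j : Fin n} (hj : j ∉ l) (v : V n) :
    (l.map C.s).prod v j = v j := by
  induction l generalizing v with
  | nil => rfl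
  | cons i t ih =>
    rw [List.map_cons, List.prod_cons, LinearEquiv.mul_apply, s_apply, Pi.sub_apply,
      Pi.smul_apply, ih (fun h => hj (List.mem_cons_of_mem i h)),
      α, Pi.single_eq_of_ne (fun h : j = i => hj (h ▸ List.mem_cons_self)), smul_zero, sub_zero]

/-- If `s_{i₁} ⋯ s_{iₖ}` fixes `v` and the `i`'s are distinct, then reading off the
`i₁`-coordinate shows that `s_{i₁}` fixes `s_{i₂} ⋯ s_{iₖ} v`, hence so does `s_{i₂} ⋯ s_{iₖ}`. -/
lemma K_coroot_eq_zero_of_prod_s_apply_eq_self {l : List (Fin n)} (hl : l.Nodup) {v : V n}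
    (hv : (l.map C.s).prod v = v) : ∀ i ∈ l, C.K (C.coroot i) v = 0 := by
  induction l with
  | nil => simp
  | cons i t ih =>
    obtain ⟨hit, ht⟩ := List.nodup_cons.mp hl
    rw [List.map_cons, List.prod_cons, LinearEquiv.mul_apply] at hv
    set w := (t.map C.s).prod v
    have hKw : C.K (C.coroot i) w = 0 := by
      have hvi := congrFun hv i
      rw [s_apply, Pi.sub_apply, Pi.smul_apply, α, Pi.single_eq_same, smul_eq_mul, mul_one,
        show w i = v i from C.prod_s_apply_of_notMem hit v] at hvi
      exact sub_eq_self.mp hvi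
    have hwv : w = v := by rwa [s_apply, hKw, zero_smul, sub_zero] at hv
    rw [hwv] at hKw
    exact List.forall_mem_cons.mpr ⟨hKw, ih ht hwv⟩

lemma K_eq_zero_of_cox_apply_eq_self {v : V n} (hv : C.cox v = v) : C.K v = 0 := by
  rw [cox, List.ofFn_eq_map] at hv
  have hcoroot := C.K_coroot_eq_zero_of_prod_s_apply_eq_self (List.nodup_finRange n) hv
  refine LinearMap.pi_ext' fun j => LinearMap.ext_ring ?_
  have hd : (C.d j : ℂ) ≠ 0 := by exact_mod_cast (C.d_pos j).ne'
  have h := hcoroot j (List.mem_finRange j)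
  rw [coroot, map_smul, LinearMap.smul_apply, smul_eq_mul, mul_eq_zero, inv_eq_zero] at h
  rw [LinearMap.comp_apply, LinearMap.zero_comp, LinearMap.zero_apply, LinearMap.single_apply, K_comm]
  exact h.resolve_left hd

def quadForm (x : Fin n → ℝ) : ℝ := ∑ i, ∑ j, x i * x j * (C.d i * (C.a i j : ℝ))

lemma re_K_star_self (u : V n) :
    (C.K (star u) u).re = C.quadForm (fun i => (u i).re) + C.quadForm (fun i => (u i).im) := by
  simp only [K_apply, quadForm, Complex.re_sum, ← Finset.sum_add_distrib]
  refine Finset.sum_congr rfl fun i _ => Finset.sum_congr rfl fun j _ => ?_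
  simp only [Pi.star_apply, Complex.star_def, Complex.mul_re, Complex.mul_im, Complex.conj_re,
    Complex.conj_im, Complex.ofReal_re, Complex.ofReal_im, Complex.intCast_re,
    Complex.intCast_im]
  ring

lemma eq_zero_of_quadForm_eq_zero {i₀ : Fin n} {x : Fin n → ℝ} (hx : x i₀ = 0)
    (hQ : C.quadForm x = 0) : x = 0 := by
  by_contra hne
  refine (C.proper_posDef _ (Finset.erase_ne_self.mpr (Finset.mem_univ i₀)) x
    (fun i hi => ?_) hne).ne' hQ
  rwa [show i = i₀ by simpa using hi]

lemma eq_zero_of_K_star_self_eq_zero {i₀ : Fin n} {u : V n} (hu : u i₀ = 0)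
    (h : C.K (star u) u = 0) : u = 0 := by
  have hQ := C.re_K_star_self u
  rw [h, Complex.zero_re] at hQ
  have hQre : 0 ≤ C.quadForm fun i => (u i).re := C.posSemidef _
  have hQim : 0 ≤ C.quadForm fun i => (u i).im := C.posSemidef _
  have hre := C.eq_zero_of_quadForm_eq_zero (i₀ := i₀) (x := fun i => (u i).re) (by simp [hu])
    (by linarith)
  have him := C.eq_zero_of_quadForm_eq_zero (i₀ := i₀) (x := fun i => (u i).im) (by simp [hu])
    (by linarith)
  exact funext fun i => Complex.ext (congrFun hre i) (congrFun him i)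

lemma mem_span_δv_of_K_star_self_eq_zero {u : V n} (h : C.K (star u) u = 0) :
    u ∈ ℂ ∙ C.δv := by
  obtain ⟨g, hg, -⟩ := C.not_posDef
  obtain ⟨i₀, -⟩ := Function.ne_iff.mp hg
  set t := u i₀ / C.δv i₀
  have hw : u - t • C.δv = 0 := by
    refine C.eq_zero_of_K_star_self_eq_zero (i₀ := i₀) ?_ ?_
    · simp [t, div_mul_cancel₀ _ (C.δv_apply_ne_zero i₀)]
    · simpa [star_sub, star_smul, star_δv, K_δv, K_apply_δv] using h
  exact Submodule.mem_span_singleton.mpr ⟨t, (sub_eq_zero.mp hw).symm⟩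

lemma mem_span_δv_of_K_eq_zero {v : V n} (h : C.K v = 0) : v ∈ ℂ ∙ C.δv :=
  C.mem_span_δv_of_K_star_self_eq_zero (by rw [K_comm, h, LinearMap.zero_apply])

lemma mem_eigSpan_of_apply_eq_smul {g : V n ≃ₗ[ℂ] V n} {μ : ℂ} {v : V n} (h : g v = μ • v) :
    v ∈ eigSpan g :=
  Submodule.mem_iSup_of_mem μ (Module.End.mem_eigenspace_iff.mpr h)

section Wgroup

variable {g : V n ≃ₗ[ℂ] V n}

lemma K_star_apply_apply_of_mem_Wgroup (hg : g ∈ C.Wgroup) (u v : V n) :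
    C.K (star (g u)) (g v) = C.K (star u) v := by
  rw [← C.apply_star_of_mem_Wgroup hg, C.K_apply_apply_of_mem_Wgroup hg]

/-- In a Jordan chain `w ↦ u ↦ 0` of `g - μ` modulo `ℂ ∙ δ`, invariance of the Hermitian form
`K (star ·) ·` makes `u` isotropic (compare `(u, w)` if `|μ| = 1`, `(u, u)` otherwise). -/
lemma mem_span_δv_of_jordan_chain (hg : g ∈ C.Wgroup) {u w : V n} {μ : ℂ}
    (hu : g u - μ • u ∈ ℂ ∙ C.δv) (hw : g w - μ • w = u) : u ∈ ℂ ∙ C.δv := by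
  obtain ⟨t, ht⟩ := Submodule.mem_span_singleton.mp hu
  have hgu : g u = μ • u + t • C.δv := by rw [ht]; abel
  have hgw : g w = μ • w + u := by rw [← hw]; abel
  have e1 := C.K_star_apply_apply_of_mem_Wgroup hg u w
  have e2 := C.K_star_apply_apply_of_mem_Wgroup hg u u
  rw [hgu, hgw] at e1
  rw [hgu] at e2
  simp only [star_add, star_smul, star_δv, map_add, map_smul, LinearMap.add_apply,
    LinearMap.smul_apply, K_δv, K_apply_δv, LinearMap.zero_apply, smul_eq_mul, mul_zero,
    add_zero] at e1 e2
  refine C.mem_span_δv_of_K_star_self_eq_zero ?_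
  by_cases hμ : star μ * μ = 1
  · have hμ0 : star μ ≠ 0 := left_ne_zero_of_mul_eq_one hμ
    have h : star μ * C.K (star u) u = 0 := by linear_combination e1 - C.K (star u) w * hμ
    exact (mul_eq_zero.mp h).resolve_left hμ0
  · have h : (star μ * μ - 1) * C.K (star u) u = 0 := by linear_combination e2
    exact (mul_eq_zero.mp h).resolve_left (sub_ne_zero.mpr hμ)

lemma sub_smul_mem_span_δv_of_mem_maxGenEigenspace (hg : g ∈ C.Wgroup) {μ : ℂ} {z : V n}
    (hz : z ∈ Module.End.maxGenEigenspace (g : Module.End ℂ (V n)) μ) : g z - μ • z ∈ ℂ ∙ C.δv := by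
  rw [Module.End.mem_maxGenEigenspace] at hz
  obtain ⟨k, hk⟩ := hz
  have hsub : ∀ x, ((g : Module.End ℂ (V n)) - μ • 1) x = g x - μ • x := fun _ => rfl
  induction k generalizing z with
  | zero => simp_all
  | succ k ih =>
    rw [pow_succ, Module.End.mul_apply, hsub] at hk
    exact C.mem_span_δv_of_jordan_chain hg (ih (z := g z - μ • z) hk) rfl

lemma maxGenEigenspace_le_eigSpan_sup (hg : g ∈ C.Wgroup) {γ : V n}
    (hγ : g γ = γ + C.δv) (μ : ℂ) :
    Module.End.maxGenEigenspace (g : Module.End ℂ (V n)) μ ≤ eigSpan g ⊔ ℂ ∙ γ := by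
  intro z hz
  obtain ⟨t, ht⟩ := Submodule.mem_span_singleton.mp
    (C.sub_smul_mem_span_δv_of_mem_maxGenEigenspace hg hz)
  have hgz : g z = μ • z + t • C.δv := by rw [ht]; abel
  by_cases hμ : μ = 1
  · subst hμ
    have hfix : g (z - t • γ) = (1 : ℂ) • (z - t • γ) := by
      rw [map_sub, map_smul, hγ, hgz]
      module
    rw [← sub_add_cancel z (t • γ)]
    exact Submodule.add_mem_sup (mem_eigSpan_of_apply_eq_smul hfix)
      (Submodule.smul_mem _ t (Submodule.mem_span_singleton_self γ))
  · have hμ' : 1 - μ ≠ 0 := sub_ne_zero.mpr (Ne.symm hμ)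
    set r := t / (1 - μ)
    have heig : g (z - r • C.δv) = μ • (z - r • C.δv) := by
      rw [map_sub, map_smul, C.apply_δv_of_mem_Wgroup hg, hgz]
      have : t = r * (1 - μ) := (div_mul_cancel₀ t hμ').symm
      rw [this]
      module
    have hδ : C.δv ∈ eigSpan g :=
      mem_eigSpan_of_apply_eq_smul (μ := 1) (by rw [one_smul, C.apply_δv_of_mem_Wgroup hg])
    rw [← sub_add_cancel z (r • C.δv)]
    exact Submodule.mem_sup_left (Submodule.add_mem _ (mem_eigSpan_of_apply_eq_smul heig)
      (Submodule.smul_mem _ r hδ))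

lemma eigSpan_sup_span_eq_top (hg : g ∈ C.Wgroup) {γ : V n} (hγ : g γ = γ + C.δv) :
    eigSpan g ⊔ ℂ ∙ γ = ⊤ := by
  rw [eq_top_iff, ← Module.End.iSup_maxGenEigenspace_eq_top (g : Module.End ℂ (V n))]
  exact iSup_le (C.maxGenEigenspace_le_eigSpan_sup hg hγ)

end Wgroup

lemma eigSpan_cox_le_ker {γ : V n} (hγ : C.cox γ = γ + C.δv) :
    eigSpan C.cox ≤ LinearMap.ker (C.K γ) := by
  refine iSup_le fun μ w hw => ?_
  replace hw : C.cox w = μ • w := Module.End.mem_eigenspace_iff.mp hw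
  rw [LinearMap.mem_ker]
  by_cases hμ : μ = 1
  · rw [hμ, one_smul] at hw
    rw [K_comm, C.K_eq_zero_of_cox_apply_eq_self hw, LinearMap.zero_apply]
  · have h : C.K γ w = μ * C.K γ w := by
      conv_lhs => rw [← C.K_apply_apply_of_mem_Wgroup C.cox_mem_Wgroup γ w]
      rw [hγ, hw, map_add, LinearMap.add_apply, K_δv, LinearMap.zero_apply, add_zero,
        map_smul, smul_eq_mul]
    have h' : (1 - μ) * C.K γ w = 0 := by linear_combination h
    exact (mul_eq_zero.mp h').resolve_left (sub_ne_zero.mpr (Ne.symm hμ))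

/-- `γ` is real, since `γ - star γ` is fixed by `c`, hence a multiple of `δ` with vanishing
`i`-coordinate. -/
lemma star_eq_self_of_cox_apply_eq_add_δv {i : Fin n} {γ : V n} (hγi : γ i = 0)
    (hγ : C.cox γ = γ + C.δv) : star γ = γ := by
  have hstar : C.cox (star γ) = star γ + C.δv := by
    rw [C.apply_star_of_mem_Wgroup C.cox_mem_Wgroup, hγ, star_add, star_δv]
  have hfix : C.cox (γ - star γ) = γ - star γ := by
    rw [map_sub, hγ, hstar]
    abel
  obtain ⟨t, ht⟩ := Submodule.mem_span_singleton.mp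
    (C.mem_span_δv_of_K_eq_zero (C.K_eq_zero_of_cox_apply_eq_self hfix))
  have hti : t * C.δv i = 0 := by simpa [hγi] using congrFun ht i
  rw [(mul_eq_zero.mp hti).resolve_right (C.δv_apply_ne_zero i), zero_smul] at ht
  exact (sub_eq_zero.mp ht.symm).symm

lemma K_self_ne_zero_of_cox_apply_eq_add_δv {i : Fin n} {γ : V n} (hγi : γ i = 0)
    (hγ : C.cox γ = γ + C.δv) : C.K γ γ ≠ 0 := by
  intro h
  have hγ0 : γ = 0 := C.eq_zero_of_K_star_self_eq_zero hγi
    (by rwa [C.star_eq_self_of_cox_apply_eq_add_δv hγi hγ])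
  rw [hγ0, map_zero, zero_add] at hγ
  exact C.δv_apply_ne_zero i (by rw [← hγ]; rfl)

lemma apply_eq_zero_of_mem_Vfin {aff : Fin n} {v : V n} (hv : v ∈ Vfin aff) : v aff = 0 := by
  have hle : Vfin aff ≤ LinearMap.ker (LinearMap.proj aff : V n →ₗ[ℂ] ℂ) := by
    rw [Vfin, Submodule.span_le]
    rintro _ ⟨i, hi, rfl⟩
    exact Pi.single_eq_of_ne (Ne.symm hi) 1
  exact hle hv

theorem _root_.Submodule.eq_ker_of_sup_span_eq_top {k E : Type*} [Field k] [AddCommGroup E]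
    [Module k E] {U : Submodule k E} {f : E →ₗ[k] k} {x : E} (hx : f x ≠ 0)
    (hU : U ≤ LinearMap.ker f) (htop : U ⊔ k ∙ x = ⊤) : U = LinearMap.ker f := by
  refine le_antisymm hU fun v hv => ?_
  obtain ⟨u, hu, y, hy, rfl⟩ := Submodule.mem_sup.mp (htop ▸ Submodule.mem_top : v ∈ U ⊔ k ∙ x)
  obtain ⟨t, rfl⟩ := Submodule.mem_span_singleton.mp hy
  rw [LinearMap.mem_ker, map_add, hU hu, zero_add, map_smul, smul_eq_mul] at hv
  rw [(mul_eq_zero.mp hv).resolve_right hx, zero_smul, add_zero]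
  exact hu

theorem eigSpan_eq_orthogonal_general {n : ℕ} (C : AffineGCM n) (aff : Fin n) :
    ∀ γ : V n, γ ∈ Vfin aff → C.cox γ - γ = C.δv →
      ∀ v : V n, v ∈ eigSpan C.cox ↔ C.K γ v = 0 := by
  intro γ hγ_fin hγ_cox
  have hγ : C.cox γ = γ + C.δv := by rw [← hγ_cox]; abel
  have hγ_aff : γ aff = 0 := apply_eq_zero_of_mem_Vfin hγ_fin
  have hU : eigSpan C.cox = LinearMap.ker (C.K γ) :=
    Submodule.eq_ker_of_sup_span_eq_top (C.K_self_ne_zero_of_cox_apply_eq_add_δv hγ_aff hγ)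
      (C.eigSpan_cox_le_ker hγ) (C.eigSpan_sup_span_eq_top C.cox_mem_Wgroup hγ)
  intro v
  rw [hU, LinearMap.mem_ker]

/-- Proposition 3.1(4): the direct sum `U c` of all eigenspaces of `c` is
`{v : K (γ_c) v = 0}`. -/
theorem eigSpan_eq_orthogonal {n : ℕ} (C : AffineGCM n) (aff : Fin n)
    (haff : ((Subgroup.closure (C.s '' {j : Fin n | j ≠ aff}) : Subgroup (V n ≃ₗ[ℂ] V n)) : Set (V n ≃ₗ[ℂ] V n)).Finite) :
    ∀ γ : V n, γ ∈ Vfin aff → C.cox γ - γ = C.δv →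
      ∀ v : V n, v ∈ eigSpan C.cox ↔ C.K γ v = 0 :=
  eigSpan_eq_orthogonal_general C aff

end AffineGCM
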